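/- Let Δ ≥ 4 be even and N ≥ 2. Let G be any connected infinite Δ-regular graph obtained by the following construction: take N pairwise disjoint copies HL(1), …, HL(N) of the thick half line HL_Δ; for each i let V(i) be the set of Δ/2 first-column vertices of HL(i); for each pair i ≠ j identify t_{ij} = t_{ji} vertices of V(i) with t_{ij} vertices of V(j) (0 ≤ t_{ij} ≤ Δ/2); then add finitely many new vertices and finitely many new edges, all new edges incident only to first-column vertices and new vertices, so that every vertex of the resulting graph has degree Δ. Then the epidemic region of G equals that of the thick line: Ω_G = Ω_{L_Δ}. -/

import Mathlib

/-! Away from the finite core (the new vertices and the first columns) the graph is a union of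
thick half lines, and a vertex in column `k + 1` sees only columns `k` and `k + 2`, exactly as on
the thick line. Inside `Ω_{L_Δ}`, start with `A` on the core and let a wave of `A` (if `r ≥ q/2`)
or of `AB` (otherwise) run along every half line, each column switching to `A` once the wave has
passed it. Outside `Ω_{L_Δ}`, take a column `c + 1` beyond the initial set on one half line: the
columns after it never leave `B`, since `B` beats `A` and `AB` against `B`/`AB` neighbours when
`q > 1/3` and `2q + 2r > 1`, and column `c + 1` never adopts `A`, since with `B` ahead, `B`
(if `q > 1/2`) or `AB` (if `r < q/2`) beats `A` whatever happens behind. -/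

namespace Contagion

open scoped BigOperators

/-- The three strategies in the contagion game. -/
inductive Strat
  | A | B | AB
deriving DecidableEq

/-- Pairwise payoff to a player using the first strategy against a neighbor
using the second strategy, in the contagion game with parameters `q, r`. -/
noncomputable def pairPayoff (q r : ℝ) : Strat → Strat → ℝ
  | .A, .A => 1 - q
  | .A, .B => 0
  | .A, .AB => 1 - q
  | .B, .A => 0
  | .B, .B => q
  | .B, .AB => q
  | .AB, .A => 1 - q - r
  | .AB, .B => q - r
  | .AB, .AB => max q (1 - q) - r

variable {V : Type*}

/-- Total payoff to vertex `v` for playing strategy `s` against profile `σ`. -/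
noncomputable def totalPayoff (G : SimpleGraph V) (q r : ℝ) (σ : V → Strat)
    (v : V) (s : Strat) : ℝ :=
  ∑ᶠ u ∈ G.neighborSet v, pairPayoff q r s (σ u)

/-- `s` is a best response of vertex `v` to the profile `σ`. -/
def IsBestResponse (G : SimpleGraph V) (q r : ℝ) (σ : V → Strat) (v : V) (s : Strat) : Prop :=
  ∀ s' : Strat, totalPayoff G q r σ v s' ≤ totalPayoff G q r σ v s

/-- Strategy `A` becomes epidemic in the contagion game `(G, q, r)`:
there are a finite initial set `S₀` (playing `A`, everybody else playing `B`) and a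
sequence `α` of vertices in which every vertex appears at least once, such that updating
at step `n` the vertex `α n` to a best response makes every vertex eventually adopt `A`. -/
def Epidemic (G : SimpleGraph V) (q r : ℝ) : Prop :=
  ∃ (S₀ : Set V) (α : ℕ → V) (σ : ℕ → V → Strat),
    S₀.Finite ∧
    Function.Surjective α ∧
    (∀ v ∈ S₀, σ 0 v = Strat.A) ∧
    (∀ v ∉ S₀, σ 0 v = Strat.B) ∧
    (∀ n, IsBestResponse G q r (σ n) (α n) (σ (n + 1) (α n))) ∧
    (∀ n v, v ≠ α n → σ (n + 1) v = σ n v) ∧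
    (∀ v, ∃ n, σ n v = Strat.A)

/-- The epidemic region `Ω_G ⊆ ℝ²` of `G`. -/
def epidemicRegion (G : SimpleGraph V) : Set (ℝ × ℝ) :=
  {p | 0 < p.1 ∧ p.1 < 1 ∧ 0 < p.2 ∧ Epidemic G p.1 p.2}

/-- `G` is `Δ`-regular: every vertex has exactly `Δ` neighbors. -/
def IsRegular (G : SimpleGraph V) (Δ : ℕ) : Prop :=
  ∀ v, (G.neighborSet v).ncard = Δ

/-- The number of neighbors of `v` lying in the set `S`. -/
noncomputable def degIn (G : SimpleGraph V) (v : V) (S : Set V) : ℕ :=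
  (G.neighborSet v ∩ S).ncard

/-- `RT Δ`: the infinite rooted tree in which the root (the empty list) has `Δ - 1`
children and every other vertex also has `Δ - 1` children (hence degree `Δ`). -/
def RT (Δ : ℕ) : SimpleGraph (List (Fin (Δ - 1))) :=
  SimpleGraph.fromRel (fun l l' => ∃ a : Fin (Δ - 1), l' = a :: l)

/-- `G` contains a subgraph isomorphic to `RT Δ`. -/
def HasRTCopy (Δ : ℕ) (G : SimpleGraph V) : Prop :=
  ∃ f : List (Fin (Δ - 1)) → V,
    Function.Injective f ∧ ∀ x y, (RT Δ).Adj x y → G.Adj (f x) (f y)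

/-- The thick half line `HL_Δ` (for even `Δ`), columns indexed by `ℕ` starting with the
first column `0`; `(k, i)` and `(l, j)` are adjacent exactly when `|k - l| = 1`. -/
def HL (Δ : ℕ) : SimpleGraph (ℕ × Fin (Δ / 2)) :=
  SimpleGraph.fromRel (fun x y => y.1 = x.1 + 1)

/-- The epidemic region of the infinite `Δ`-regular tree:
`{(q,r) : q,r > 0, r ≥ ((Δ-1)/Δ)q, q ≤ 1/Δ} ∪ {(q,r) : q,r > 0, 2q + Δr ≤ 1}`. -/
def treeRegion (Δ : ℕ) : Set (ℝ × ℝ) :=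
  {p | 0 < p.1 ∧ 0 < p.2 ∧ ((Δ : ℝ) - 1) / Δ * p.1 ≤ p.2 ∧ p.1 ≤ 1 / Δ} ∪
  {p | 0 < p.1 ∧ 0 < p.2 ∧ 2 * p.1 + Δ * p.2 ≤ 1}

/-- The epidemic region of the thick line `L_Δ`:
`{(q,r) : 0 < q ≤ 1/2, r ≥ q/2} ∪ {(q,r) : q,r > 0, r ≤ q/2, 2q + 2r ≤ 1}`. -/
def thickLineRegion : Set (ℝ × ℝ) :=
  {p | 0 < p.1 ∧ p.1 ≤ 1 / 2 ∧ p.1 / 2 ≤ p.2} ∪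
  {p | 0 < p.1 ∧ 0 < p.2 ∧ p.2 ≤ p.1 / 2 ∧ 2 * p.1 + 2 * p.2 ≤ 1}

/-- `(SAB, SB)` is a blocking structure for the contagion game `(G, q, r)`
on a `Δ`-regular graph `G`. -/
def IsBlockingStructure (G : SimpleGraph V) (Δ : ℕ) (q r : ℝ) (SAB SB : Set V) : Prop :=
  Disjoint SAB SB ∧ (SAB.Nonempty ∨ SB.Nonempty) ∧
  (∀ v ∈ SAB, r / q * Δ < (degIn G v SB : ℝ)) ∧
  ∀ v ∈ SB,
    (1 - q - r) * Δ < (1 - q) * (degIn G v SB : ℝ) + min q (1 - q) * (degIn G v SAB : ℝ) ∧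
    (1 - q) * Δ < (degIn G v SB : ℝ) + q * (degIn G v SAB : ℝ)

/-- The two strategies of the `A`-`B` coordination game. -/
inductive CStrat
  | A | B
deriving DecidableEq

/-- Pairwise payoff in the `A`-`B` coordination game `(G, q)`. -/
noncomputable def cPairPayoff (q : ℝ) : CStrat → CStrat → ℝ
  | .A, .A => 1 - q
  | .A, .B => 0
  | .B, .A => 0
  | .B, .B => q

/-- Total payoff to `v` for playing `s` against profile `σ` in the coordination game. -/
noncomputable def cTotalPayoff (G : SimpleGraph V) (q : ℝ) (σ : V → CStrat)
    (v : V) (s : CStrat) : ℝ :=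
  ∑ᶠ u ∈ G.neighborSet v, cPairPayoff q s (σ u)

/-- `s` is a best response of `v` to `σ` in the coordination game. -/
def CIsBestResponse (G : SimpleGraph V) (q : ℝ) (σ : V → CStrat) (v : V) (s : CStrat) : Prop :=
  ∀ s' : CStrat, cTotalPayoff G q σ v s' ≤ cTotalPayoff G q σ v s

/-- Strategy `A` becomes epidemic in the coordination game `(G, q)` starting from the
initial set `S₀`. -/
def CoordEpidemicFrom (G : SimpleGraph V) (q : ℝ) (S₀ : Set V) : Prop :=
  ∃ (α : ℕ → V) (σ : ℕ → V → CStrat),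
    Function.Surjective α ∧
    (∀ v ∈ S₀, σ 0 v = CStrat.A) ∧
    (∀ v ∉ S₀, σ 0 v = CStrat.B) ∧
    (∀ n, CIsBestResponse G q (σ n) (α n) (σ (n + 1) (α n))) ∧
    (∀ n v, v ≠ α n → σ (n + 1) v = σ n v) ∧
    (∀ v, ∃ n, σ n v = CStrat.A)

/-- Strategy `A` becomes epidemic in the coordination game `(G, q)`. -/
def CoordEpidemic (G : SimpleGraph V) (q : ℝ) : Prop :=
  ∃ S₀ : Set V, S₀.Finite ∧ CoordEpidemicFrom G q S₀

open Function

lemma mul_add_lt_mul_add {p a b i j : ℕ} (hi : i < p) (h : a < b ∨ a = b ∧ i < j) :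
    a * p + i < b * p + j := by
  rcases h with hab | ⟨rfl, hij⟩
  · have := Nat.mul_le_mul_right p hab
    rw [Nat.succ_mul] at this
    omega
  · omega

section Payoffs

variable {q r : ℝ}

lemma pairPayoff_le_A (hq : q ≤ 1 / 2) (hr : 0 ≤ r) {t : Strat} (ht : t = .A ∨ t = .AB)
    (s : Strat) : pairPayoff q r s t ≤ pairPayoff q r .A t := by
  have hmax : max q (1 - q) = 1 - q := max_eq_right (by linarith)
  rcases ht with rfl | rfl <;> cases s <;> simp only [pairPayoff, hmax] <;> linarith

lemma pairPayoff_add_B_lt (hq : 1 / 3 < q) (hqr : 1 < 2 * q + 2 * r) (hr : 0 < r)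
    {s t : Strat} (hs : s ≠ .B) (ht : t = .B ∨ t = .AB) :
    pairPayoff q r s t + pairPayoff q r s .B < pairPayoff q r .B t + pairPayoff q r .B .B := by
  have hmax : max q (1 - q) < q + 2 * r := max_lt (by linarith) (by linarith)
  rcases ht with rfl | rfl <;> cases s <;> simp only [pairPayoff] at hs ⊢ <;>
    first | exact absurd rfl hs | linarith

lemma pairPayoff_A_add_lt_B (hq : 1 / 2 < q) (t : Strat) :
    pairPayoff q r .A t + pairPayoff q r .A .B < pairPayoff q r .B t + pairPayoff q r .B .B := by
  cases t <;> simp only [pairPayoff] <;> linarith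

lemma pairPayoff_A_add_lt_AB (hr : 0 < r) (hrq : r < q / 2) (t : Strat) :
    pairPayoff q r .A t + pairPayoff q r .A .B < pairPayoff q r .AB t + pairPayoff q r .AB .B := by
  cases t <;> simp only [pairPayoff] <;> linarith [le_max_right q (1 - q)]

/-- Pairing each neighbour behind (playing `A` or `w`) with one ahead (playing `B`): `w` is then a
best response at the front of a wave of `w` running along a thick half line. -/
def IsWaveStrategy (q r : ℝ) (w : Strat) : Prop :=
  w ≠ .B ∧ ∀ t, (t = .A ∨ t = w) → ∀ s,
    pairPayoff q r s t + pairPayoff q r s .B ≤ pairPayoff q r w t + pairPayoff q r w .B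

lemma IsWaveStrategy.eq_A_or_eq_AB {w t : Strat} (hw : IsWaveStrategy q r w)
    (ht : t = .A ∨ t = w) : t = .A ∨ t = .AB := by
  rcases ht with rfl | rfl
  · exact .inl rfl
  · cases t <;> simp_all [IsWaveStrategy]

lemma isWaveStrategy_A (hq : q ≤ 1 / 2) (hrq : q / 2 ≤ r) : IsWaveStrategy q r .A := by
  refine ⟨by simp, ?_⟩
  rintro t (rfl | rfl) s <;> cases s <;> simp only [pairPayoff] <;> linarith

lemma isWaveStrategy_AB (hq : 0 < q) (hrq : r ≤ q / 2) (hqr : 2 * q + 2 * r ≤ 1) :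
    IsWaveStrategy q r .AB := by
  refine ⟨by simp, ?_⟩
  rintro t (rfl | rfl) s <;> cases s <;> simp only [pairPayoff] <;>
    linarith [le_max_right q (1 - q)]

lemma exists_isWaveStrategy {p : ℝ × ℝ} (hp : p ∈ thickLineRegion) :
    0 < p.1 ∧ p.1 ≤ 1 / 2 ∧ 0 < p.2 ∧ ∃ w, IsWaveStrategy p.1 p.2 w := by
  rcases hp with ⟨hq, hq2, hrq⟩ | ⟨hq, hr, hrq, hqr⟩
  · exact ⟨hq, hq2, by linarith, .A, isWaveStrategy_A hq2 hrq⟩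
  · exact ⟨hq, by linarith, hr, .AB, isWaveStrategy_AB hq hrq hqr⟩

lemma front_of_notMem_thickLineRegion {p : ℝ × ℝ} (hq : 0 < p.1) (hr : 0 < p.2)
    (hp : p ∉ thickLineRegion) :
    1 / 3 < p.1 ∧ 1 < 2 * p.1 + 2 * p.2 ∧ (1 / 2 < p.1 ∨ p.2 < p.1 / 2) := by
  simp only [thickLineRegion, Set.mem_union, Set.mem_ofPred_eq, not_or, not_and, not_le] at hp
  by_cases hq2 : p.1 ≤ 1 / 2
  · have hrq := hp.1 hq hq2
    have hqr := hp.2 hq hr hrq.le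
    exact ⟨by linarith, hqr, .inr hrq⟩
  · exact ⟨by linarith, by linarith, .inl (by linarith)⟩

lemma isBestResponse_A_of_forall_neighbor {G : SimpleGraph V} {σ : V → Strat} {v : V}
    (hfin : (G.neighborSet v).Finite) (hq : q ≤ 1 / 2) (hr : 0 ≤ r)
    (h : ∀ u ∈ G.neighborSet v, σ u = .A ∨ σ u = .AB) : IsBestResponse G q r σ v .A :=
  fun s => by
    rw [totalPayoff, totalPayoff, finsum_mem_eq_finite_toFinset_sum _ hfin,
      finsum_mem_eq_finite_toFinset_sum _ hfin]
    exact Finset.sum_le_sum fun u hu => pairPayoff_le_A hq hr (h u (hfin.mem_toFinset.1 hu)) s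

end Payoffs

section ThickHalfLine

variable {Δ : ℕ}

lemma HL_adj_iff {x y : ℕ × Fin (Δ / 2)} : (HL Δ).Adj x y ↔ y.1 = x.1 + 1 ∨ x.1 = y.1 + 1 := by
  rw [HL, SimpleGraph.fromRel_adj]
  refine ⟨And.right, fun h => ⟨?_, h⟩⟩
  rintro rfl
  omega

variable {G : SimpleGraph V} (f : (HL Δ).Copy G)

def adjColumns (k : ℕ) : Fin (Δ / 2) ⊕ Fin (Δ / 2) → V :=
  Sum.elim (fun j => f (k, j)) (fun j => f (k + 2, j))

lemma adjColumns_injective (k : ℕ) : Injective (adjColumns f k) := by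
  rintro (j | j) (j' | j') h <;>
    simpa [adjColumns, Prod.ext_iff] using f.injective h

lemma neighborSet_eq_range_adjColumns (hReg : IsRegular G Δ) (hEven : Even Δ) (k : ℕ)
    (i : Fin (Δ / 2)) : G.neighborSet (f (k + 1, i)) = Set.range (adjColumns f k) := by
  have hΔ : Δ = Δ / 2 + Δ / 2 := by obtain ⟨c, rfl⟩ := hEven; omega
  symm
  apply Set.eq_of_subset_of_ncard_le
  · rintro _ ⟨j | j, rfl⟩ <;> exact f.toHom.map_adj (HL_adj_iff.2 (by simp))
  · rw [hReg, Set.ncard_range_of_injective (adjColumns_injective f k), Nat.card_sum,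
      Nat.card_eq_fintype_card, Fintype.card_fin, ← hΔ]
  · exact Set.finite_of_ncard_ne_zero (by rw [hReg]; have := i.2; omega)

lemma totalPayoff_eq_sum_adjColumns (hReg : IsRegular G Δ) (hEven : Even Δ) (q r : ℝ)
    (σ : V → Strat) (k : ℕ) (i : Fin (Δ / 2)) (s : Strat) :
    totalPayoff G q r σ (f (k + 1, i)) s =
      ∑ j, (pairPayoff q r s (σ (f (k, j))) + pairPayoff q r s (σ (f (k + 2, j)))) := by
  rw [totalPayoff, neighborSet_eq_range_adjColumns f hReg hEven,
    finsum_mem_range (adjColumns_injective f k), finsum_eq_sum_of_fintype,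
    Fintype.sum_sum_type, ← Finset.sum_add_distrib]
  rfl

variable {f} {q r : ℝ} {σ : V → Strat} {k : ℕ} {i : Fin (Δ / 2)} {s : Strat}

lemma isBestResponse_of_adjColumns (hReg : IsRegular G Δ) (hEven : Even Δ)
    (h : ∀ s' j, pairPayoff q r s' (σ (f (k, j))) + pairPayoff q r s' (σ (f (k + 2, j))) ≤
      pairPayoff q r s (σ (f (k, j))) + pairPayoff q r s (σ (f (k + 2, j)))) :
    IsBestResponse G q r σ (f (k + 1, i)) s := fun s' => by
  simp only [totalPayoff_eq_sum_adjColumns f hReg hEven]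
  exact Finset.sum_le_sum fun j _ => h s' j

lemma not_isBestResponse_of_adjColumns (hReg : IsRegular G Δ) (hEven : Even Δ) {s' : Strat}
    (h : ∀ j, pairPayoff q r s (σ (f (k, j))) + pairPayoff q r s (σ (f (k + 2, j))) <
      pairPayoff q r s' (σ (f (k, j))) + pairPayoff q r s' (σ (f (k + 2, j)))) :
    ¬ IsBestResponse G q r σ (f (k + 1, i)) s := fun hbr => by
  refine (hbr s').not_gt ?_
  simp only [totalPayoff_eq_sum_adjColumns f hReg hEven]
  exact Finset.sum_lt_sum_of_nonempty ⟨i, Finset.mem_univ _⟩ fun j _ => h j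

lemma exists_forall_column_notMem {S : Set V} (hS : S.Finite) :
    ∃ c, ∀ k ≥ c, ∀ i, f (k + 1, i) ∉ S := by
  obtain ⟨c, hc⟩ := ((hS.preimage f.injective.injOn).image Prod.fst).bddAbove
  exact ⟨c, fun k hk i hmem => by have := hc ⟨(k + 1, i), hmem, rfl⟩; omega⟩

def IsBlockedBeyond (f : (HL Δ).Copy G) (c : ℕ) (τ : V → Strat) : Prop :=
  ∀ k ≥ c, ∀ i, τ (f (k + 1, i)) = .B ∨ k = c ∧ τ (f (k + 1, i)) = .AB

variable {c : ℕ} {τ τ' : V → Strat} {v : V}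

lemma IsBlockedBeyond.update (hτ : IsBlockedBeyond f c τ) (hReg : IsRegular G Δ)
    (hEven : Even Δ) (hq : 1 / 3 < q) (hqr : 1 < 2 * q + 2 * r) (hr : 0 < r)
    (hfront : 1 / 2 < q ∨ r < q / 2) (hτ' : ∀ u, u ≠ v → τ' u = τ u)
    (hbr : IsBestResponse G q r τ v (τ' v)) : IsBlockedBeyond f c τ' := by
  intro k hk i
  by_cases hv : f (k + 1, i) = v
  swap
  · rw [hτ' _ hv]
    exact hτ k hk i
  subst hv
  have hahead : ∀ j, τ (f (k + 2, j)) = .B := fun j =>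
    (hτ (k + 1) (by omega) j).resolve_right (by omega)
  rcases hk.eq_or_lt with rfl | hk
  · cases hs : τ' (f (c + 1, i))
    · rw [hs] at hbr
      refine absurd hbr ?_
      rcases hfront with hq2 | hrq
      · exact not_isBestResponse_of_adjColumns hReg hEven (s' := .B) fun j => by
          rw [hahead j]; exact pairPayoff_A_add_lt_B hq2 _
      · exact not_isBestResponse_of_adjColumns hReg hEven (s' := .AB) fun j => by
          rw [hahead j]; exact pairPayoff_A_add_lt_AB hr hrq _
    · exact .inl rfl
    · exact .inr ⟨rfl, rfl⟩
  · obtain ⟨k, rfl⟩ : ∃ k', k = k' + 1 := ⟨k - 1, by omega⟩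
    refine .inl (by_contra fun hs => not_isBestResponse_of_adjColumns hReg hEven (s' := .B)
      (fun j => ?_) hbr)
    rw [hahead j]
    refine pairPayoff_add_B_lt hq hqr hr hs ?_
    rcases hτ k (by omega) j with h | ⟨-, h⟩
    · exact .inl h
    · exact .inr h

theorem not_epidemic_of_HL_copy (f : (HL Δ).Copy G) (hReg : IsRegular G Δ) (hEven : Even Δ)
    (hΔ : 2 ≤ Δ) (hq : 1 / 3 < q) (hqr : 1 < 2 * q + 2 * r) (hr : 0 < r)
    (hfront : 1 / 2 < q ∨ r < q / 2) : ¬ Epidemic G q r := by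
  rintro ⟨S₀, α, σ, hS₀, -, -, hB, hbr, hstay, hall⟩
  obtain ⟨c, hc⟩ := exists_forall_column_notMem (f := f) hS₀
  have hblocked : ∀ n, IsBlockedBeyond f c (σ n) := by
    intro n
    induction n with
    | zero => exact fun k hk i => .inl (hB _ (hc k hk i))
    | succ n ih => exact ih.update hReg hEven hq hqr hr hfront (hstay n) (hbr n)
  obtain ⟨n, hn⟩ := hall (f (c + 2, ⟨0, by omega⟩))
  rcases hblocked n (c + 1) (by omega) _ with h | ⟨h, -⟩
  · exact absurd (hn.symm.trans h) (by decide)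
  · omega

end ThickHalfLine

section Sweep

variable {ι : Type*} [Fintype ι]

variable (ι) in
def phaseLength : ℕ := 2 * Fintype.card ι + 1

noncomputable def rowIndex (x : ι) : ℕ := Fintype.equivFin ι x

lemma rowIndex_lt (x : ι) : rowIndex x < Fintype.card ι := (Fintype.equivFin ι x).isLt

noncomputable def waveTime (x : ι) (k : ℕ) : ℕ := k * phaseLength ι + rowIndex x

noncomputable def settleTime (x : ι) (k : ℕ) : ℕ :=
  k * phaseLength ι + (Fintype.card ι + rowIndex x)

/-- Phase `b` (the steps `b * phaseLength ι + j`) first updates every `ρ x (b + 1)`, which joins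
the wave, then every `ρ x b`, which settles on `A`, and finally `e b`. -/
noncomputable def sweepSchedule (ρ : ι → ℕ → V) (e : ℕ → V) (n : ℕ) : V :=
  let b := n / phaseLength ι
  let j := n % phaseLength ι
  if hj : j < Fintype.card ι then ρ ((Fintype.equivFin ι).symm ⟨j, hj⟩) (b + 1)
  else if hj' : j - Fintype.card ι < Fintype.card ι then
    ρ ((Fintype.equivFin ι).symm ⟨j - Fintype.card ι, hj'⟩) b
  else e b

open Classical in
noncomputable def sweepProfile (ρ : ι → ℕ → V) (S₀ : Set V) (w : Strat) (n : ℕ) (v : V) :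
    Strat :=
  if v ∈ S₀ then .A
  else if ∃ x k, v = ρ x (k + 1) ∧ settleTime x (k + 1) < n then .A
  else if ∃ x k, v = ρ x (k + 1) ∧ waveTime x k < n then w
  else .B

structure IsRayDecomposition (ρ : ι → ℕ → V) (S₀ : Set V) : Prop where
  injective : Injective fun p : ι × ℕ => ρ p.1 (p.2 + 1)
  notMem : ∀ x k, ρ x (k + 1) ∉ S₀
  zero_mem : ∀ x, ρ x 0 ∈ S₀
  cover : ∀ v, v ∈ S₀ ∨ ∃ x k, v = ρ x (k + 1)

variable {ρ : ι → ℕ → V} {e : ℕ → V}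

lemma sweepSchedule_mul_add {b j : ℕ} (hj : j < phaseLength ι) :
    sweepSchedule ρ e (b * phaseLength ι + j) =
      if hj : j < Fintype.card ι then ρ ((Fintype.equivFin ι).symm ⟨j, hj⟩) (b + 1)
      else if hj' : j - Fintype.card ι < Fintype.card ι then
        ρ ((Fintype.equivFin ι).symm ⟨j - Fintype.card ι, hj'⟩) b
      else e b := by
  have hdiv : (b * phaseLength ι + j) / phaseLength ι = b := by
    rw [add_comm, Nat.add_mul_div_right _ _ (by omega), Nat.div_eq_of_lt hj, zero_add]
  have hmod : (b * phaseLength ι + j) % phaseLength ι = j := by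
    rw [add_comm, Nat.add_mul_mod_self_right, Nat.mod_eq_of_lt hj]
  simp only [sweepSchedule, hdiv, hmod]

lemma sweepSchedule_waveTime (x : ι) (k : ℕ) :
    sweepSchedule ρ e (waveTime x k) = ρ x (k + 1) := by
  have hx := rowIndex_lt x
  rw [waveTime, sweepSchedule_mul_add (by rw [phaseLength]; omega), dif_pos hx]
  simp [rowIndex]

lemma sweepSchedule_settleTime (x : ι) (k : ℕ) : sweepSchedule ρ e (settleTime x k) = ρ x k := by
  have hx := rowIndex_lt x
  rw [settleTime, sweepSchedule_mul_add (by rw [phaseLength]; omega), dif_neg (by omega),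
    dif_pos (by omega)]
  simp [rowIndex]

lemma sweepSchedule_initial (b : ℕ) :
    sweepSchedule ρ e (b * phaseLength ι + 2 * Fintype.card ι) = e b := by
  rw [sweepSchedule_mul_add (by rw [phaseLength]; omega), dif_neg (by omega), dif_neg (by omega)]

lemma eq_waveTime_or_settleTime_or_initial (n : ℕ) :
    (∃ x k, n = waveTime (ι := ι) x k) ∨ (∃ x k, n = settleTime (ι := ι) x k) ∨
      ∃ b, n = b * phaseLength ι + 2 * Fintype.card ι := by
  obtain ⟨b, j, hj, rfl⟩ : ∃ b j, j < phaseLength ι ∧ n = b * phaseLength ι + j :=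
    ⟨_, _, Nat.mod_lt n (by rw [phaseLength]; omega), (Nat.div_add_mod' n _).symm⟩
  by_cases h1 : j < Fintype.card ι
  · exact .inl ⟨(Fintype.equivFin ι).symm ⟨j, h1⟩, b, by simp [waveTime, rowIndex]⟩
  by_cases h2 : j - Fintype.card ι < Fintype.card ι
  · refine .inr (.inl ⟨(Fintype.equivFin ι).symm ⟨j - Fintype.card ι, h2⟩, b, ?_⟩)
    simp only [settleTime, rowIndex, Equiv.apply_symm_apply]
    omega
  · exact .inr (.inr ⟨b, by rw [phaseLength] at hj; omega⟩)

lemma sweepSchedule_surjective {S₀ : Set V} (hρ : IsRayDecomposition ρ S₀)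
    (he : S₀ = Set.range e) : Surjective (sweepSchedule ρ e) := by
  intro v
  rcases hρ.cover v with hv | ⟨x, k, rfl⟩
  · obtain ⟨b, rfl⟩ := he ▸ hv
    exact ⟨_, sweepSchedule_initial b⟩
  · exact ⟨_, sweepSchedule_waveTime x k⟩

variable {S₀ : Set V} {w : Strat} {n : ℕ}

lemma sweepProfile_of_mem {v : V} (hv : v ∈ S₀) : sweepProfile ρ S₀ w n v = .A := by
  simp [sweepProfile, hv]

lemma sweepProfile_zero_of_notMem {v : V} (hv : v ∉ S₀) : sweepProfile ρ S₀ w 0 v = .B := by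
  simp [sweepProfile, hv]

lemma sweepProfile_ray (hρ : IsRayDecomposition ρ S₀) (x : ι) (k : ℕ) :
    sweepProfile ρ S₀ w n (ρ x (k + 1)) =
      if settleTime x (k + 1) < n then .A else if waveTime x k < n then w else .B := by
  have huniq : ∀ y l, ρ x (k + 1) = ρ y (l + 1) ↔ y = x ∧ l = k := fun y l =>
    ⟨fun h => by simpa [Prod.ext_iff, eq_comm] using @hρ.injective (x, k) (y, l) h, by rintro ⟨rfl, rfl⟩; rfl⟩
  simp [sweepProfile, hρ.notMem, huniq]

lemma waveTime_lt_settleTime (x y : ι) {k l : ℕ} (h : k ≤ l) :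
    waveTime x k < settleTime y l := by
  have := rowIndex_lt x
  exact mul_add_lt_mul_add (by rw [phaseLength]; omega) (by have := rowIndex_lt y; omega)

lemma waveTime_lt_waveTime_succ (x y : ι) (k : ℕ) : waveTime x k < waveTime y (k + 1) := by
  have := rowIndex_lt x
  exact mul_add_lt_mul_add (by rw [phaseLength]; omega) (by have := rowIndex_lt y; omega)

lemma settleTime_lt_settleTime_succ (x y : ι) (k : ℕ) : settleTime x k < settleTime y (k + 1) := by
  have := rowIndex_lt x
  exact mul_add_lt_mul_add (by rw [phaseLength]; omega) (by have := rowIndex_lt y; omega)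

lemma sweepProfile_eq_A_or_of_waveTime_lt (hρ : IsRayDecomposition ρ S₀) {x : ι} {k : ℕ}
    (hn : waveTime x k < n) :
    sweepProfile ρ S₀ w n (ρ x (k + 1)) = .A ∨ sweepProfile ρ S₀ w n (ρ x (k + 1)) = w := by
  rw [sweepProfile_ray hρ, if_pos hn]
  split_ifs <;> simp

lemma sweepProfile_eq_A_or_of_card_le (hρ : IsRayDecomposition ρ S₀)
    (hn : Fintype.card ι ≤ n) (x : ι) :
    sweepProfile ρ S₀ w n (ρ x 1) = .A ∨ sweepProfile ρ S₀ w n (ρ x 1) = w :=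
  sweepProfile_eq_A_or_of_waveTime_lt hρ (k := 0)
    (by have := rowIndex_lt x; rw [waveTime]; omega)

lemma sweepProfile_waveTime_succ (hρ : IsRayDecomposition ρ S₀) (x : ι) (k : ℕ) :
    sweepProfile ρ S₀ w (waveTime x k + 1) (ρ x (k + 1)) = w := by
  have := waveTime_lt_settleTime x x (Nat.le_add_right k 1)
  rw [sweepProfile_ray hρ, if_neg (by omega), if_pos (by omega)]

lemma sweepProfile_waveTime_ahead (hρ : IsRayDecomposition ρ S₀) (x y : ι) (k : ℕ) :
    sweepProfile ρ S₀ w (waveTime x k) (ρ y (k + 2)) = .B := by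
  have := waveTime_lt_waveTime_succ x y k
  have : waveTime x k < settleTime y (k + 1 + 1) := waveTime_lt_settleTime x y (by omega)
  rw [sweepProfile_ray hρ, if_neg (by omega), if_neg (by omega)]

lemma sweepProfile_waveTime_behind (hρ : IsRayDecomposition ρ S₀) (x y : ι) (k : ℕ) :
    sweepProfile ρ S₀ w (waveTime x k) (ρ y k) = .A ∨
      sweepProfile ρ S₀ w (waveTime x k) (ρ y k) = w := by
  cases k with
  | zero => exact .inl (sweepProfile_of_mem (hρ.zero_mem y))
  | succ k =>
    have := waveTime_lt_settleTime x y (le_refl (k + 1))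
    rw [sweepProfile_ray hρ, if_neg (by omega), if_pos (waveTime_lt_waveTime_succ y x k)]
    exact .inr rfl

lemma sweepProfile_settleTime_succ (hρ : IsRayDecomposition ρ S₀) (x : ι) (k : ℕ) :
    sweepProfile ρ S₀ w (settleTime x (k + 1) + 1) (ρ x (k + 1)) = .A := by
  rw [sweepProfile_ray hρ, if_pos (Nat.lt_succ_self _)]

lemma sweepProfile_settleTime_behind (hρ : IsRayDecomposition ρ S₀) (x y : ι) (k : ℕ) :
    sweepProfile ρ S₀ w (settleTime x (k + 1)) (ρ y k) = .A := by
  cases k with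
  | zero => exact sweepProfile_of_mem (hρ.zero_mem y)
  | succ k => rw [sweepProfile_ray hρ, if_pos (settleTime_lt_settleTime_succ y x (k + 1))]

lemma sweepProfile_succ_of_ne (hρ : IsRayDecomposition ρ S₀) {v : V}
    (hv : v ≠ sweepSchedule ρ e n) : sweepProfile ρ S₀ w (n + 1) v = sweepProfile ρ S₀ w n v := by
  rcases hρ.cover v with hv₀ | ⟨x, k, rfl⟩
  · rw [sweepProfile_of_mem hv₀, sweepProfile_of_mem hv₀]
  have h₁ : waveTime x k ≠ n := fun h => hv (h ▸ (sweepSchedule_waveTime x k).symm)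
  have h₂ : settleTime x (k + 1) ≠ n := fun h => hv (h ▸ (sweepSchedule_settleTime x _).symm)
  simp only [sweepProfile_ray hρ, Nat.lt_succ_iff_lt_or_eq, h₁, h₂, or_false]

lemma exists_sweepProfile_eq_A (hρ : IsRayDecomposition ρ S₀) (v : V) :
    ∃ n, sweepProfile ρ S₀ w n v = .A := by
  rcases hρ.cover v with hv | ⟨x, k, rfl⟩
  · exact ⟨0, sweepProfile_of_mem hv⟩
  · exact ⟨_, sweepProfile_settleTime_succ hρ x k⟩

end Sweep

section Construction

variable {Δ N : ℕ}

structure IsHalfLineConstruction (G : SimpleGraph V) (Δ N : ℕ) (Z : Set V)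
    (φ : Fin N → ℕ × Fin (Δ / 2) → V) : Prop where
  injective : ∀ m, Injective (φ m)
  notMem_new : ∀ m x, φ m x ∉ Z
  overlap : ∀ m m', m ≠ m' → ∀ x y, φ m x = φ m' y → x.1 = 0 ∧ y.1 = 0
  adj : ∀ m x y, (HL Δ).Adj x y → G.Adj (φ m x) (φ m y)
  cover : ∀ v : V, v ∈ Z ∨ ∃ m x, φ m x = v
  adj_cases : ∀ u v : V, G.Adj u v →
    (∃ m x y, (HL Δ).Adj x y ∧ u = φ m x ∧ v = φ m y) ∨
    ((u ∈ Z ∨ ∃ m i, u = φ m (0, i)) ∧ (v ∈ Z ∨ ∃ m i, v = φ m (0, i)))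

def ray (φ : Fin N → ℕ × Fin (Δ / 2) → V) (x : Fin N × Fin (Δ / 2)) (k : ℕ) : V :=
  φ x.1 (k, x.2)

def initialSet (Z : Set V) (φ : Fin N → ℕ × Fin (Δ / 2) → V) : Set V :=
  Z ∪ Set.range fun x => ray φ x 0

namespace IsHalfLineConstruction

variable {G : SimpleGraph V} {Z : Set V} {φ : Fin N → ℕ × Fin (Δ / 2) → V}

def copy (hφ : IsHalfLineConstruction G Δ N Z φ) (m : Fin N) : (HL Δ).Copy G :=
  ⟨⟨φ m, hφ.adj m _ _⟩, hφ.injective m⟩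

lemma copy_apply (hφ : IsHalfLineConstruction G Δ N Z φ) (m : Fin N) (x : ℕ × Fin (Δ / 2)) :
    hφ.copy m x = φ m x :=
  rfl

lemma eq_of_apply_eq (hφ : IsHalfLineConstruction G Δ N Z φ) {m m' : Fin N}
    {x y : ℕ × Fin (Δ / 2)} (hx : x.1 ≠ 0) (h : φ m x = φ m' y) : m = m' ∧ x = y := by
  by_cases hm : m = m'
  · subst hm
    exact ⟨rfl, hφ.injective m h⟩
  · exact absurd (hφ.overlap m m' hm x y h).1 hx

lemma isRayDecomposition (hφ : IsHalfLineConstruction G Δ N Z φ) :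
    IsRayDecomposition (ray φ) (initialSet Z φ) where
  injective := by
    rintro ⟨⟨m, i⟩, k⟩ ⟨⟨m', i'⟩, l⟩ h
    obtain ⟨rfl, h⟩ := hφ.eq_of_apply_eq (by simp) h
    simp_all
  notMem := by
    rintro ⟨m, i⟩ k (h | ⟨⟨m', i'⟩, h⟩)
    · exact hφ.notMem_new _ _ h
    · simpa using (hφ.eq_of_apply_eq (x := (k + 1, i)) (by simp) h.symm).2
  zero_mem x := .inr ⟨x, rfl⟩
  cover v := by
    rcases hφ.cover v with hv | ⟨m, ⟨_ | k, i⟩, rfl⟩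
    · exact .inl (.inl hv)
    · exact .inl (.inr ⟨(m, i), rfl⟩)
    · exact .inr ⟨(m, i), k, rfl⟩

lemma mem_or_eq_ray_one_of_adj (hφ : IsHalfLineConstruction G Δ N Z φ) {u v : V}
    (hv : v ∈ initialSet Z φ) (huv : G.Adj v u) :
    u ∈ initialSet Z φ ∨ ∃ y, u = ray φ y 1 := by
  rcases hφ.adj_cases v u huv with ⟨m, ⟨k, i⟩, ⟨l, j⟩, hadj, rfl, rfl⟩ | ⟨-, hu | ⟨m, i, rfl⟩⟩
  · cases k with
    | succ k => exact absurd hv (hφ.isRayDecomposition.notMem (m, i) k)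
    | zero =>
      obtain rfl : l = 1 := by simpa using HL_adj_iff.1 hadj
      exact .inr ⟨(m, j), rfl⟩
  · exact .inl (.inl hu)
  · exact .inl (.inr ⟨(m, i), rfl⟩)

variable {q r : ℝ} {w : Strat}

lemma isBestResponse_A_of_mem_initialSet (hφ : IsHalfLineConstruction G Δ N Z φ)
    (hReg : IsRegular G Δ) (hΔ : Δ ≠ 0) (hq : q ≤ 1 / 2) (hr : 0 ≤ r) (hw : IsWaveStrategy q r w)
    {n : ℕ} (hn : Fintype.card (Fin N × Fin (Δ / 2)) ≤ n) {v : V} (hv : v ∈ initialSet Z φ) :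
    IsBestResponse G q r (sweepProfile (ray φ) (initialSet Z φ) w n) v .A := by
  refine isBestResponse_A_of_forall_neighbor
    (Set.finite_of_ncard_ne_zero (by rw [hReg v]; exact hΔ)) hq hr fun u hu => ?_
  rcases hφ.mem_or_eq_ray_one_of_adj hv hu with hu | ⟨y, rfl⟩
  · exact .inl (sweepProfile_of_mem hu)
  · exact hw.eq_A_or_eq_AB (sweepProfile_eq_A_or_of_card_le hφ.isRayDecomposition hn y)

lemma isBestResponse_waveTime (hφ : IsHalfLineConstruction G Δ N Z φ) (hReg : IsRegular G Δ)
    (hEven : Even Δ) (hw : IsWaveStrategy q r w) (m : Fin N) (i : Fin (Δ / 2)) (k : ℕ) :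
    IsBestResponse G q r (sweepProfile (ray φ) (initialSet Z φ) w (waveTime (m, i) k))
      (ray φ (m, i) (k + 1)) w := by
  refine isBestResponse_of_adjColumns (f := hφ.copy m) hReg hEven fun s j => ?_
  have hahead := sweepProfile_waveTime_ahead hφ.isRayDecomposition (m, i) (m, j) k (w := w)
  have hbehind := sweepProfile_waveTime_behind hφ.isRayDecomposition (m, i) (m, j) k (w := w)
  simp only [ray, copy_apply] at hahead hbehind ⊢
  rw [hahead]
  exact hw.2 _ hbehind s

lemma isBestResponse_settleTime (hφ : IsHalfLineConstruction G Δ N Z φ) (hReg : IsRegular G Δ)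
    (hEven : Even Δ) (hq : q ≤ 1 / 2) (hr : 0 ≤ r) (hw : IsWaveStrategy q r w) (m : Fin N)
    (i : Fin (Δ / 2)) (k : ℕ) :
    IsBestResponse G q r (sweepProfile (ray φ) (initialSet Z φ) w (settleTime (m, i) (k + 1)))
      (ray φ (m, i) (k + 1)) .A := by
  have hρ := hφ.isRayDecomposition
  refine isBestResponse_of_adjColumns (f := hφ.copy m) hReg hEven fun s j => ?_
  have hbehind := sweepProfile_settleTime_behind hρ (m, i) (m, j) k (w := w)
  have hahead := hw.eq_A_or_eq_AB (sweepProfile_eq_A_or_of_waveTime_lt hρ (x := (m, j))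
    (k := k + 1) (waveTime_lt_settleTime (m, j) (m, i) le_rfl))
  simp only [ray, copy_apply] at hahead hbehind ⊢
  rw [hbehind]
  exact add_le_add (pairPayoff_le_A hq hr (.inl rfl) s) (pairPayoff_le_A hq hr hahead s)

lemma isBestResponse_sweep (hφ : IsHalfLineConstruction G Δ N Z φ) (hReg : IsRegular G Δ)
    (hEven : Even Δ) (hΔ : Δ ≠ 0) (hq : q ≤ 1 / 2) (hr : 0 ≤ r) (hw : IsWaveStrategy q r w)
    {e : ℕ → V} (he : initialSet Z φ = Set.range e) (n : ℕ) :
    IsBestResponse G q r (sweepProfile (ray φ) (initialSet Z φ) w n) (sweepSchedule (ray φ) e n)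
      (sweepProfile (ray φ) (initialSet Z φ) w (n + 1) (sweepSchedule (ray φ) e n)) := by
  have hρ := hφ.isRayDecomposition
  rcases eq_waveTime_or_settleTime_or_initial (ι := Fin N × Fin (Δ / 2)) n with
    ⟨⟨m, i⟩, k, rfl⟩ | ⟨⟨m, i⟩, _ | k, rfl⟩ | ⟨b, rfl⟩
  · rw [sweepSchedule_waveTime, sweepProfile_waveTime_succ hρ]
    exact hφ.isBestResponse_waveTime hReg hEven hw m i k
  · rw [sweepSchedule_settleTime, sweepProfile_of_mem (hρ.zero_mem _)]
    exact hφ.isBestResponse_A_of_mem_initialSet hReg hΔ hq hr hw (by simp [settleTime])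
      (hρ.zero_mem _)
  · rw [sweepSchedule_settleTime, sweepProfile_settleTime_succ hρ]
    exact hφ.isBestResponse_settleTime hReg hEven hq hr hw m i k
  · have hv : e b ∈ initialSet Z φ := he ▸ ⟨b, rfl⟩
    rw [sweepSchedule_initial, sweepProfile_of_mem hv]
    exact hφ.isBestResponse_A_of_mem_initialSet hReg hΔ hq hr hw (le_add_left (by omega)) hv

theorem epidemic (hφ : IsHalfLineConstruction G Δ N Z φ) (hReg : IsRegular G Δ)
    (hEven : Even Δ) (hΔ : 2 ≤ Δ) (hN : 0 < N) (hZ : Z.Finite) (hq : q ≤ 1 / 2) (hr : 0 ≤ r)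
    (hw : IsWaveStrategy q r w) : Epidemic G q r := by
  have hρ := hφ.isRayDecomposition
  have hfin : (initialSet Z φ).Finite := hZ.union (Set.finite_range _)
  obtain ⟨e, he⟩ := hfin.countable.exists_eq_range ⟨_, hρ.zero_mem (⟨0, hN⟩, ⟨0, by omega⟩)⟩
  exact ⟨initialSet Z φ, sweepSchedule (ray φ) e, sweepProfile (ray φ) (initialSet Z φ) w, hfin,
    sweepSchedule_surjective hρ he, fun _ hv => sweepProfile_of_mem hv,
    fun _ hv => sweepProfile_zero_of_notMem hv,
    hφ.isBestResponse_sweep hReg hEven (by omega) hq hr hw he,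
    fun _ _ hv => sweepProfile_succ_of_ne hρ hv, exists_sweepProfile_eq_A hρ⟩

end IsHalfLineConstruction

end Construction

theorem construction_region_eq_thickLine_general {V : Type*} (Δ N : ℕ) (hΔ : 4 ≤ Δ)
    (hEven : Even Δ) (hN : 2 ≤ N)
    (G : SimpleGraph V) (hReg : IsRegular G Δ)
    (Z : Set V) (hZfin : Z.Finite)
    (φ : Fin N → (ℕ × Fin (Δ / 2)) → V)
    (hinj : ∀ m, Function.Injective (φ m))
    (hZdisj : ∀ m x, φ m x ∉ Z)
    (hoverlap : ∀ m m', m ≠ m' → ∀ x y, φ m x = φ m' y → x.1 = 0 ∧ y.1 = 0)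
    (hsub : ∀ m x y, (HL Δ).Adj x y → G.Adj (φ m x) (φ m y))
    (hcover : ∀ v : V, v ∈ Z ∨ ∃ m x, φ m x = v)
    (hedges : ∀ u v : V, G.Adj u v →
      (∃ m x y, (HL Δ).Adj x y ∧ u = φ m x ∧ v = φ m y) ∨
      ((u ∈ Z ∨ ∃ m i, u = φ m (0, i)) ∧ (v ∈ Z ∨ ∃ m i, v = φ m (0, i)))) :
    epidemicRegion G = thickLineRegion := by
  have hφ : IsHalfLineConstruction G Δ N Z φ := ⟨hinj, hZdisj, hoverlap, hsub, hcover, hedges⟩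
  ext p
  refine ⟨fun ⟨hq, _, hr, hep⟩ => by_contra fun hp => ?_, fun hp => ?_⟩
  · obtain ⟨hq3, hqr, hfront⟩ := front_of_notMem_thickLineRegion hq hr hp
    exact not_epidemic_of_HL_copy (hφ.copy ⟨0, by omega⟩) hReg hEven (by omega) hq3 hqr hr
      hfront hep
  · obtain ⟨hq, hq2, hr, w, hw⟩ := exists_isWaveStrategy hp
    exact ⟨hq, by linarith, hr, hφ.epidemic hReg hEven (by omega) (by omega) hZfin hq2 hr.le hw⟩

/-- Let `Δ ≥ 4` be even and `N ≥ 2`.  Suppose the connected infinite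
`Δ`-regular graph `G` is obtained from `N` copies of the thick half line `HL_Δ`
(embedded via `φ 0, …, φ (N-1)`) by identifying some first-column vertices of different
copies, adding a finite set `Z` of new vertices, and adding new edges only between
first-column/new vertices, in such a way that the result is `Δ`-regular.  Then
`Ω_G = Ω_{L_Δ}`. -/
theorem construction_region_eq_thickLine {V : Type*} (Δ N : ℕ) (hΔ : 4 ≤ Δ)
    (hEven : Even Δ) (hN : 2 ≤ N)
    (G : SimpleGraph V) (hInf : Infinite V) (hConn : G.Connected) (hReg : IsRegular G Δ)
    (Z : Set V) (hZfin : Z.Finite)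
    (φ : Fin N → (ℕ × Fin (Δ / 2)) → V)
    (hinj : ∀ m, Function.Injective (φ m))
    (hZdisj : ∀ m x, φ m x ∉ Z)
    (hoverlap : ∀ m m', m ≠ m' → ∀ x y, φ m x = φ m' y → x.1 = 0 ∧ y.1 = 0)
    (hsub : ∀ m x y, (HL Δ).Adj x y → G.Adj (φ m x) (φ m y))
    (hcover : ∀ v : V, v ∈ Z ∨ ∃ m x, φ m x = v)
    (hedges : ∀ u v : V, G.Adj u v →
      (∃ m x y, (HL Δ).Adj x y ∧ u = φ m x ∧ v = φ m y) ∨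
      ((u ∈ Z ∨ ∃ m i, u = φ m (0, i)) ∧ (v ∈ Z ∨ ∃ m i, v = φ m (0, i)))) :
    epidemicRegion G = thickLineRegion :=
  construction_region_eq_thickLine_general Δ N hΔ hEven hN G hReg Z hZfin φ hinj hZdisj hoverlap
    hsub hcover hedges

end Contagion
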